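/- arXiv:2403.17970 — 9 statements merged into one kernel-verified Lean document; each statement's English description precedes it below -/
import Mathlib

section
/- Let D be a division ring with char(D) ≠ 2, let A = M_m(D) be the ring of m×m matrices over D, and let f, g : A → A be additive functions such that x^{-n} f(x) + g(x^{-1}) = 0 for every invertible x ∈ A, where n is an odd integer. Then f(x) = 0 and g(x) = 0 for all x ∈ A. -/
/-!
Replacing a unit `u` by `-u` leaves `u^(-n) f(u)` unchanged (as `n` is odd and `f` additive) but
flips the sign of `g(u⁻¹)`; since `2` is invertible, `g` vanishes on units, and then so does `f`.
Additivity finishes the proof because every matrix over `D` is a sum of two units: split `x` into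
a lower triangular part with diagonal `c_i` and an upper triangular rest with diagonal
`x_ii - c_i`, where `c_i` and `x_ii - c_i` are nonzero (possible as `2 ≠ 0`). A triangular
matrix `M` with unit diagonal `d` is invertible because `d⁻¹ M - 1` is strictly triangular,
hence nilpotent.
-/

namespace Matrix

variable {R : Type*} [Ring R] {m : ℕ}

theorem pow_eq_zero_of_strictUpperTriangular (N : Matrix (Fin m) (Fin m) R)
    (hN : ∀ i j, j ≤ i → N i j = 0) : N ^ m = 0 := by
  have key : ∀ (k : ℕ) (i j : Fin m), (j : ℕ) < i + k → (N ^ k) i j = 0 := by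
    intro k
    induction k with
    | zero => exact fun i j h => one_apply_ne fun e => by subst e; omega
    | succ k ih =>
      intro i j h
      rw [pow_succ, mul_apply]
      refine Finset.sum_eq_zero fun l _ => ?_
      rcases le_or_gt j l with hl | hl
      · rw [hN l j hl, mul_zero]
      · rw [ih i l (by omega), zero_mul]
  ext i j
  exact key m i j (by omega)

theorem isUnit_of_upperTriangular (M : Matrix (Fin m) (Fin m) R)
    (hM : ∀ i j, j < i → M i j = 0) (hdiag : ∀ i, IsUnit (M i i)) : IsUnit M := by
  obtain ⟨u, hu⟩ := Pi.isUnit_iff.mpr hdiag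
  let e := Units.map (diagonalRingHom (Fin m) R : (Fin m → R) →* Matrix (Fin m) (Fin m) R) u⁻¹
  have he : (e : Matrix (Fin m) (Fin m) R) = diagonal (↑u⁻¹ : Fin m → R) := rfl
  have hN : IsNilpotent ((e : Matrix (Fin m) (Fin m) R) * M - 1) := by
    refine ⟨m, pow_eq_zero_of_strictUpperTriangular _ fun i j hji => ?_⟩
    rw [he, sub_apply, diagonal_mul]
    rcases hji.lt_or_eq with hlt | rfl
    · rw [hM i j hlt, mul_zero, one_apply_ne hlt.ne', sub_zero]
    · rw [one_apply_eq, ← congrFun hu j, ← Pi.mul_apply, Units.inv_mul, Pi.one_apply, sub_self]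
  rw [← Units.isUnit_units_mul e]
  simpa using hN.isUnit_one_add

theorem isUnit_of_lowerTriangular (M : Matrix (Fin m) (Fin m) R)
    (hM : ∀ i j, i < j → M i j = 0) (hdiag : ∀ i, IsUnit (M i i)) : IsUnit M := by
  have hrev : IsUnit (reindexAlgEquiv ℕ R Fin.revPerm M) :=
    isUnit_of_upperTriangular _ (fun i j hji => hM _ _ (Fin.rev_lt_rev.mpr hji)) fun i => hdiag _
  exact (MulEquiv.isUnit_map _).mp hrev

theorem exists_units_add_eq (h : ∀ a : R, ∃ u v : Rˣ, (u : R) + v = a)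
    (x : Matrix (Fin m) (Fin m) R) :
    ∃ u v : (Matrix (Fin m) (Fin m) R)ˣ, (u : Matrix (Fin m) (Fin m) R) + v = x := by
  choose c c' hcc' using fun i => h (x i i)
  let L : Matrix (Fin m) (Fin m) R :=
    of fun i j => if j < i then x i j else if i = j then (c i : R) else 0
  have hL : IsUnit L := by
    refine isUnit_of_lowerTriangular L (fun i j hij => ?_) fun i => by simp [L]
    simp [L, hij.not_gt, hij.ne]
  have hU : IsUnit (x - L) := by
    refine isUnit_of_upperTriangular (x - L) (fun i j hji => by simp [L, hji]) fun i => ?_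
    simp [L, ← hcc' i]
  exact ⟨hL.unit, hU.unit, add_sub_cancel L x⟩

end Matrix

theorem DivisionRing.exists_units_add_eq {D : Type*} [DivisionRing D] (h2 : (2 : D) ≠ 0) (a : D) :
    ∃ u v : Dˣ, (u : D) + v = a := by
  by_cases ha : a = 1
  · refine ⟨Units.mk0 2 h2, -1, ?_⟩
    rw [ha]; norm_num
  · exact ⟨Units.mk0 (a - 1) (sub_ne_zero.mpr ha), 1, sub_add_cancel a 1⟩

section FunctionalEquation

variable {A : Type*} [Ring A] {n : ℤ} (f g : A →+ A)

theorem apply_units_eq_zero_right (h2 : IsUnit (2 : A)) (hn : Odd n)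
    (hfg : ∀ u : Aˣ, ↑(u ^ (-n)) * f u + g ↑u⁻¹ = 0) (u : Aˣ) : g u = 0 := by
  have h := hfg u⁻¹
  have hneg := hfg (-u⁻¹)
  rw [hn.neg.neg_zpow, inv_neg, inv_inv] at hneg
  simp only [Units.val_neg, map_neg, neg_mul_neg] at hneg
  rw [inv_inv] at h
  have hgg : g u + g u = 0 := eq_neg_iff_add_eq_zero.mp (add_left_cancel (h.trans hneg.symm))
  rwa [← two_mul, h2.mul_right_eq_zero] at hgg

theorem apply_units_eq_zero_left (h2 : IsUnit (2 : A)) (hn : Odd n)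
    (hfg : ∀ u : Aˣ, ↑(u ^ (-n)) * f u + g ↑u⁻¹ = 0) (u : Aˣ) : f u = 0 := by
  have h := hfg u
  rwa [apply_units_eq_zero_right f g h2 hn hfg, add_zero, Units.mul_right_eq_zero] at h

theorem eq_zero_of_forall_units_add_eq (hsum : ∀ a : A, ∃ u v : Aˣ, (u : A) + v = a)
    (h2 : IsUnit (2 : A)) (hn : Odd n) (hfg : ∀ u : Aˣ, ↑(u ^ (-n)) * f u + g ↑u⁻¹ = 0) :
    f = 0 ∧ g = 0 := by
  constructor <;> ext a <;> obtain ⟨u, v, rfl⟩ := hsum a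
  · simp [apply_units_eq_zero_left f g h2 hn hfg]
  · simp [apply_units_eq_zero_right f g h2 hn hfg]

end FunctionalEquation

theorem stmt_0_general (D : Type*) [DivisionRing D] (hchar : ringChar D ≠ 2)
    (m : ℕ) (n : ℤ) (hn : Odd n)
    (f g : Matrix (Fin m) (Fin m) D → Matrix (Fin m) (Fin m) D)
    (hf : ∀ x y, f (x + y) = f x + f y)
    (hg : ∀ x y, g (x + y) = g x + g y)
    (hfg : ∀ u : (Matrix (Fin m) (Fin m) D)ˣ,
      (u ^ (-n)).val * f u.val + g (u⁻¹).val = 0) :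
    ∀ x, f x = 0 ∧ g x = 0 := by
  have h2 : (2 : D) ≠ 0 := Ring.two_ne_zero hchar
  have h2A : IsUnit (2 : Matrix (Fin m) (Fin m) D) := by
    rw [← map_ofNat (Matrix.scalar (Fin m) : D →+* _) 2]
    exact h2.isUnit.map _
  obtain ⟨hF, hG⟩ := eq_zero_of_forall_units_add_eq (.mk' f hf) (.mk' g hg)
    (Matrix.exists_units_add_eq (DivisionRing.exists_units_add_eq h2)) h2A hn hfg
  exact fun x => ⟨DFunLike.congr_fun hF x, DFunLike.congr_fun hG x⟩

theorem stmt_0 (D : Type*) [DivisionRing D] (hchar : ringChar D ≠ 2)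
    (m : ℕ) (hm : 0 < m) (n : ℤ) (hn : Odd n)
    (f g : Matrix (Fin m) (Fin m) D → Matrix (Fin m) (Fin m) D)
    (hf : ∀ x y, f (x + y) = f x + f y)
    (hg : ∀ x y, g (x + y) = g x + g y)
    (hfg : ∀ u : (Matrix (Fin m) (Fin m) D)ˣ,
      (u ^ (-n)).val * f u.val + g (u⁻¹).val = 0) :
    ∀ x, f x = 0 ∧ g x = 0 :=
  stmt_0_general D hchar m n hn f g hf hg hfg
end

section
/- Let n > 2 be an even integer and D a division ring with char(D) > n (or char 0). If f, g : D → D are additive functions satisfying x^{-n} f(x) + g(x^{-1}) = 0 for all x ≠ 0, then f(x) = g(x) = 0 for all x ∈ D. -/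
/-- An additive map commutes with multiplication by natural-number casts. -/
lemma add_map_natCast_mul {D : Type*} [DivisionRing D] (f : D → D)
    (hf : ∀ x y, f (x + y) = f x + f y) (m : ℕ) (x : D) :
    f ((m : D) * x) = (m : D) * f x := by
  have h0 : f 0 = 0 := by
    have := hf 0 0
    simpa using this
  induction m with
  | zero => simpa using h0
  | succ k ih =>
      push_cast
      rw [add_mul, one_mul, hf, ih, add_mul, one_mul]

theorem stmt_5 (D : Type*) [DivisionRing D] (n : ℕ) (hn : Even n) (hn2 : 2 < n)
    (hchar : ringChar D = 0 ∨ n < ringChar D)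
    (f g : D → D)
    (hf : ∀ x y, f (x + y) = f x + f y)
    (hg : ∀ x y, g (x + y) = g x + g y)
    (hfg : ∀ x : D, x ≠ 0 → x ^ (-(n : ℤ)) * f x + g x⁻¹ = 0) :
    ∀ x : D, f x = 0 ∧ g x = 0 := by
  have hf0 : f 0 = 0 := by have := hf 0 0; simpa using this
  have hg0 : g 0 = 0 := by have := hg 0 0; simpa using this
  -- rewrite the identity using (x⁻¹)^n
  have hfg' : ∀ x : D, x ≠ 0 → (x⁻¹) ^ n * f x + g x⁻¹ = 0 := by
    intro x hx
    have := hfg x hx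
    rwa [zpow_neg, zpow_natCast, ← inv_pow] at this
  -- find m : ℕ with (m : D) ≠ 0 and (m : D)^(n-2) ≠ 1
  obtain ⟨m, hm0, hm1⟩ : ∃ m : ℕ, (m : D) ≠ 0 ∧ (m : D) ^ (n - 2) ≠ 1 := by
    rcases hchar with h0 | hp
    · haveI : CharP D 0 := h0 ▸ ringChar.charP D
      haveI : CharZero D := CharP.charP_to_charZero D
      refine ⟨2, by norm_num, ?_⟩
      have h2 : (1 : ℕ) < 2 ^ (n - 2) := Nat.one_lt_two_pow (by omega)
      have : ((2 : ℕ) : D) ^ (n - 2) ≠ ((1 : ℕ) : D) := by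
        rw [← Nat.cast_pow]
        exact fun h => (Nat.cast_injective h ▸ h2).false
      simpa using this
    · set p := ringChar D with hpdef
      haveI : CharP D p := ringChar.charP D
      have hp' : p.Prime := by
        rcases CharP.char_is_prime_or_zero D p with h | h
        · exact h
        · omega
      haveI : Fact p.Prime := ⟨hp'⟩
      obtain ⟨gen, hgen⟩ := IsCyclic.exists_generator (α := (ZMod p)ˣ)
      have hord : orderOf gen = p - 1 := by
        rw [orderOf_eq_card_of_forall_mem_zpowers hgen, Nat.card_eq_fintype_card,
          ZMod.card_units_eq_totient, Nat.totient_prime hp']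
      have hgenpow : gen ^ (n - 2) ≠ 1 := by
        intro h
        have hdvd : orderOf gen ∣ n - 2 := orderOf_dvd_of_pow_eq_one h
        rw [hord] at hdvd
        have := Nat.le_of_dvd (by omega) hdvd
        omega
      set a : ZMod p := ((gen : (ZMod p)ˣ) : ZMod p) with ha
      have φinj : Function.Injective (ZMod.castHom (dvd_refl p) D) :=
        (ZMod.castHom (dvd_refl p) D).injective
      refine ⟨a.val, ?_, ?_⟩
      · have hcast : ((a.val : ℕ) : D) = (ZMod.castHom (dvd_refl p) D) a := by
          rw [← map_natCast (ZMod.castHom (dvd_refl p) D) a.val, ZMod.natCast_val,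
            ZMod.cast_id]
        rw [hcast]
        intro h
        have : a = 0 := φinj (by simpa using h)
        exact gen.ne_zero this
      · have hcast : ((a.val : ℕ) : D) = (ZMod.castHom (dvd_refl p) D) a := by
          rw [← map_natCast (ZMod.castHom (dvd_refl p) D) a.val, ZMod.natCast_val,
            ZMod.cast_id]
        rw [hcast, ← map_pow, ← map_one (ZMod.castHom (dvd_refl p) D)]
        intro h
        have ha' : a ^ (n - 2) = 1 := φinj h
        apply hgenpow
        ext
        simpa using ha'
  -- key step: f vanishes on nonzero elements
  have hfkey : ∀ x : D, x ≠ 0 → f x = 0 := by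
    intro x hx
    set c : D := (m : D) with hc
    have hcmul : ∀ z : D, c * z = z * c := fun z => (Nat.cast_commute m z).eq
    have hy : c * x ≠ 0 := mul_ne_zero hm0 hx
    have E1 := hfg' x hx
    have E2 := hfg' (c * x) hy
    -- simplify E2
    have hinv : (c * x)⁻¹ = c⁻¹ * x⁻¹ := by
      rw [mul_inv_rev]
      exact ((Nat.cast_commute m x⁻¹).inv_left₀.eq).symm
    set u : D := (x⁻¹) ^ n with hu
    set A : D := u * f x with hA
    set B : D := g x⁻¹ with hB
    have hun : u ≠ 0 := pow_ne_zero _ (inv_ne_zero hx)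
    -- rewrite E2
    have hfc : f (c * x) = c * f x := add_map_natCast_mul f hf m x
    have hgc : g (c⁻¹ * x⁻¹) = c⁻¹ * B := by
      have h1 : g ((m : D) * (c⁻¹ * x⁻¹)) = (m : D) * g (c⁻¹ * x⁻¹) :=
        add_map_natCast_mul g hg m _
      rw [← hc, mul_inv_cancel_left₀ hm0] at h1
      rw [hB, h1, inv_mul_cancel_left₀ hm0]
    have hmulpow : (c⁻¹ * x⁻¹) ^ n = (c⁻¹) ^ n * u :=
      (Nat.cast_commute m x⁻¹).inv_left₀.mul_pow n
    rw [hinv, hfc, hgc, hmulpow] at E2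
    -- E2 : (c⁻¹)^n * u * (c * f x) + c⁻¹ * B = 0
    have hcu : u * c = c * u := ((Nat.cast_commute m u).eq).symm
    have E2' : ((c⁻¹) ^ n * c) * A + c⁻¹ * B = 0 := by
      rw [← E2]
      congr 1
      rw [hA, mul_assoc, mul_assoc, ← mul_assoc u c (f x), hcu, mul_assoc]
    have E3 : c ^ n * (((c⁻¹) ^ n * c) * A) + c ^ n * (c⁻¹ * B) = 0 := by
      rw [← mul_add, E2', mul_zero]
    have h1 : c ^ n * (((c⁻¹) ^ n * c) * A) = c * A := by
      rw [mul_assoc ((c⁻¹) ^ n) c A, ← mul_assoc (c ^ n), inv_pow,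
        mul_inv_cancel₀ (pow_ne_zero n hm0), one_mul]
    have hcn : c ^ n = c ^ (n - 1) * c := by
      rw [← pow_succ]
      congr 1
      omega
    have h2 : c ^ n * (c⁻¹ * B) = c ^ (n - 1) * B := by
      rw [hcn, mul_assoc, mul_inv_cancel_left₀ hm0]
    rw [h1, h2] at E3
    have hBA : B = -A := eq_neg_of_add_eq_zero_right E1
    rw [hBA, mul_neg, ← sub_eq_add_neg, ← sub_mul] at E3
    have hne : c - c ^ (n - 1) ≠ 0 := by
      intro h
      apply hm1
      have hceq : c = c ^ (n - 1) := sub_eq_zero.mp h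
      have hp1 : c ^ (n - 1) = c ^ (n - 2) * c := by
        rw [← pow_succ]
        congr 1
        omega
      exact mul_right_cancel₀ hm0 (by rw [one_mul, ← hp1, ← hceq] : c ^ (n - 2) * c = 1 * c)
    have hA0 : A = 0 := by
      rcases mul_eq_zero.mp E3 with h | h
      · exact absurd h hne
      · exact h
    rw [hA] at hA0
    rcases mul_eq_zero.mp hA0 with h | h
    · exact absurd h hun
    · exact h
  intro x
  rcases eq_or_ne x 0 with rfl | hx
  · exact ⟨hf0, hg0⟩
  · have hfx : f x = 0 := hfkey x hx
    have hgx : g x = 0 := by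
      have := hfg' x⁻¹ (inv_ne_zero hx)
      rw [hfkey x⁻¹ (inv_ne_zero hx), mul_zero, zero_add, inv_inv] at this
      exact this
    exact ⟨hfx, hgx⟩
end

section
/- Let p be a prime and n an integer such that p - 1 divides n - 2. Define f, g : Z_p → Z_p by f(x) = x and g(x) = -x. Then f and g are additive and satisfy x^{-n} f(x) + g(x^{-1}) = 0 for every nonzero x in Z_p, yet f(1) ≠ 0. -/
theorem FiniteField.zpow_eq_one_of_card_sub_one_dvd {K : Type*} [Field K] [Fintype K] {x : K}
    (hx : x ≠ 0) {k : ℤ} (hk : ((Fintype.card K : ℤ) - 1) ∣ k) : x ^ k = 1 := by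
  obtain ⟨m, rfl⟩ := hk
  have hcard : ((Fintype.card K : ℤ) - 1) = ((Fintype.card K - 1 : ℕ) : ℤ) := by
    rw [Nat.cast_sub Fintype.card_pos, Nat.cast_one]
  rw [zpow_mul, hcard, zpow_natCast, FiniteField.pow_card_sub_one_eq_one x hx, one_zpow]

theorem FiniteField.zpow_neg_mul_self_eq_inv {K : Type*} [Field K] [Fintype K] {x : K}
    (hx : x ≠ 0) {n : ℤ} (hn : ((Fintype.card K : ℤ) - 1) ∣ (n - 2)) : x ^ (-n) * x = x⁻¹ := by
  have hexp : -n + 1 = -1 + -(n - 2) := by ring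
  rw [← zpow_add_one₀ hx, hexp, zpow_add₀ hx, zpow_neg_one,
    zpow_eq_one_of_card_sub_one_dvd hx (dvd_neg.mpr hn), mul_one]

theorem stmt_10 (p : ℕ) [Fact p.Prime] (n : ℤ) (hdvd : ((p : ℤ) - 1) ∣ (n - 2)) :
    let f : ZMod p → ZMod p := fun x => x
    let g : ZMod p → ZMod p := fun x => -x
    (∀ x y, f (x + y) = f x + f y) ∧ (∀ x y, g (x + y) = g x + g y) ∧
    (∀ x : ZMod p, x ≠ 0 → x ^ (-n) * f x + g x⁻¹ = 0) ∧ f 1 ≠ 0 := by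
  intro f g
  refine ⟨fun _ _ => rfl, neg_add, fun x hx => ?_, one_ne_zero⟩
  have hcard : ((Fintype.card (ZMod p) : ℤ) - 1) ∣ (n - 2) := by rwa [ZMod.card]
  simp only [f, g, FiniteField.zpow_neg_mul_self_eq_inv hx hcard, add_neg_cancel]
end

section
/- Let D be a field of characteristic 2 and f, g : D → D additive functions satisfying x^{-1} f(x) + g(x^{-1}) = 0 for all x ≠ 0. Then f(aba) = a g(b) for all a, b ∈ D. -/
/-!
In characteristic 2 the hypothesis says `g x⁻¹ = x⁻¹ * f x`, equivalently `f x = x * g x⁻¹`, for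
every `x` (both sides vanish at `0`). Hence `f` of an inverse of a sum of inverses is computable
from `f` alone: `f (x⁻¹ + y⁻¹)⁻¹ = (x⁻¹ + y⁻¹)⁻¹ * (x⁻¹ * f x + y⁻¹ * f y)`. Hua's identity
`a * b * a = a + (a⁻¹ + (b⁻¹ + a)⁻¹)⁻¹` writes `a * b * a` in exactly this shape, and expanding
gives `f (a * b * a) = a * g b`.
-/

section DivisionRing

variable {D : Type*} [DivisionRing D] [CharP D 2] {f g : D →+ D}

theorem map_inv_eq_inv_mul (hfg : ∀ x : D, x ≠ 0 → x⁻¹ * f x + g x⁻¹ = 0) (x : D) :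
    g x⁻¹ = x⁻¹ * f x := by
  rcases eq_or_ne x 0 with rfl | hx
  · simp
  · rw [← CharTwo.neg_eq (x⁻¹ * f x)]
    exact eq_neg_of_add_eq_zero_right (hfg x hx)

theorem map_eq_mul_map_inv (hfg : ∀ x : D, x ≠ 0 → x⁻¹ * f x + g x⁻¹ = 0) (x : D) :
    f x = x * g x⁻¹ := by
  rcases eq_or_ne x 0 with rfl | hx
  · simp
  · rw [map_inv_eq_inv_mul hfg, mul_inv_cancel_left₀ hx]

theorem map_inv_add_inv (hfg : ∀ x : D, x ≠ 0 → x⁻¹ * f x + g x⁻¹ = 0) (x y : D) :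
    f (x⁻¹ + y⁻¹)⁻¹ = (x⁻¹ + y⁻¹)⁻¹ * (x⁻¹ * f x + y⁻¹ * f y) := by
  rw [map_eq_mul_map_inv hfg, inv_inv, map_add, map_inv_eq_inv_mul hfg,
    map_inv_eq_inv_mul hfg]

end DivisionRing

section Field

variable {D : Type*} [Field D] [CharP D 2]

theorem inv_add_inv_add_inv_eq {a b : D} (ha : a ≠ 0) (hb : b ≠ 0) (hab : a * b ≠ 1) :
    (a⁻¹ + (b⁻¹ + a)⁻¹)⁻¹ = a * (b⁻¹ + a) * b := by
  have : 1 + a * b ≠ 0 := by rwa [Ne, CharTwo.add_eq_zero, eq_comm]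
  refine inv_eq_of_mul_eq_one_right ?_
  field_simp
  linear_combination (a * b) * CharTwo.two_eq_zero (R := D)

theorem hua_identity {a b : D} (ha : a ≠ 0) (hb : b ≠ 0) (hab : a * b ≠ 1) :
    a * b * a = a + (a⁻¹ + (b⁻¹ + a)⁻¹)⁻¹ := by
  rw [inv_add_inv_add_inv_eq ha hb hab, mul_add, add_mul, inv_mul_cancel_right₀ hb, ← add_assoc,
    CharTwo.add_self_eq_zero, zero_add]
  ring

theorem map_mul_mul_self {f g : D →+ D} (hfg : ∀ x : D, x ≠ 0 → x⁻¹ * f x + g x⁻¹ = 0)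
    (a b : D) : f (a * b * a) = a * g b := by
  rcases eq_or_ne a 0 with rfl | ha
  · simp
  rcases eq_or_ne b 0 with rfl | hb
  · simp
  rcases eq_or_ne (a * b) 1 with hab | hab
  · rw [eq_inv_of_mul_eq_one_right hab, mul_inv_cancel₀ ha, one_mul, map_eq_mul_map_inv hfg]
  have hfb : f b⁻¹ = b⁻¹ * g b := by rw [map_eq_mul_map_inv hfg, inv_inv]
  rw [hua_identity ha hb hab, map_add, map_inv_add_inv hfg, map_add, hfb,
    inv_add_inv_add_inv_eq ha hb hab]
  have : 1 + a * b ≠ 0 := by rwa [Ne, CharTwo.add_eq_zero, eq_comm]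
  field_simp
  linear_combination (a * b + 1) * f a * CharTwo.two_eq_zero (R := D)

end Field

theorem stmt_11 (D : Type*) [Field D] [CharP D 2] (f g : D → D)
    (hf : ∀ x y, f (x + y) = f x + f y)
    (hg : ∀ x y, g (x + y) = g x + g y)
    (hfg : ∀ x : D, x ≠ 0 → x⁻¹ * f x + g x⁻¹ = 0) :
    ∀ a b : D, f (a * b * a) = a * g b :=
  map_mul_mul_self (f := AddMonoidHom.mk' f hf) (g := AddMonoidHom.mk' g hg) hfg
end

section
/- Let D be a field of characteristic 2 and f, g : D → D additive functions satisfying x^{-1} f(x) + g(x^{-1}) = 0 for all x ≠ 0. Then f = g, and f(aba) = a f(b) for all a, b ∈ D. -/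
/-!
Pushing Hua's identity `x⁻¹ - (x + t)⁻¹ = (x ^ 2 / t + x)⁻¹` through the additive map `g` and
rewriting each `g u⁻¹` as `-u⁻¹ * f u` gives `f (x ^ 2 / t) = -(x / t) * f t`, in any field.
In characteristic 2 the sign disappears; `x = 1` yields `f t⁻¹ = t⁻¹ * f t`, which together with
the hypothesis gives `f = g`, and `x = a`, `t = b⁻¹` yields `f (a * b * a) = a * f b`.
-/

theorem map_sq_div_eq_neg {K : Type*} [Field K] (f g : K →+ K)
    (hfg : ∀ x : K, x ≠ 0 → x⁻¹ * f x + g x⁻¹ = 0) {x t : K} (hx : x ≠ 0) (ht : t ≠ 0) (hxt : x + t ≠ 0) :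
    f (x ^ 2 / t) = -(x / t * f t) := by
  have hsum : x ^ 2 / t + x = x * (x + t) / t := by field_simp
  have hsum0 : x ^ 2 / t + x ≠ 0 := hsum ▸ div_ne_zero (mul_ne_zero hx hxt) ht
  have hua : g x⁻¹ - g (x + t)⁻¹ = g (x ^ 2 / t + x)⁻¹ := by
    rw [← map_sub, inv_sub_inv hx hxt, hsum, inv_div, add_sub_cancel_left, div_mul_eq_div_div]
  rw [eq_neg_of_add_eq_zero_right (hfg x hx), eq_neg_of_add_eq_zero_right (hfg _ hxt),
    eq_neg_of_add_eq_zero_right (hfg _ hsum0), map_add, map_add] at hua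
  field_simp at hua
  rw [div_mul_eq_mul_div, eq_neg_iff_add_eq_zero, ← mul_right_inj' ht]
  field_simp
  linear_combination hua

namespace CharTwo
variable {K : Type*} [Field K] [CharP K 2] (f g : K →+ K)
  (hfg : ∀ x : K, x ≠ 0 → x⁻¹ * f x + g x⁻¹ = 0)
include hfg

theorem map_sq_div_of_inv_mul_add_map_inv_eq_zero {x t : K} (hx : x ≠ 0) (ht : t ≠ 0)
    (hxt : x + t ≠ 0) : f (x ^ 2 / t) = x / t * f t := by
  rw [map_sq_div_eq_neg f g hfg hx ht hxt, neg_eq]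

theorem map_inv_of_inv_mul_add_map_inv_eq_zero (t : K) : f t⁻¹ = t⁻¹ * f t := by
  rcases eq_or_ne t 0 with rfl | ht
  · simp
  rcases eq_or_ne t 1 with rfl | ht1
  · simp
  have h1t : (1 : K) + t ≠ 0 := fun h ↦ ht1 (CharTwo.add_eq_zero.mp h).symm
  simpa using map_sq_div_of_inv_mul_add_map_inv_eq_zero f g hfg one_ne_zero ht h1t

theorem eq_of_inv_mul_add_map_inv_eq_zero : f = g := by
  have h (y : K) : f y⁻¹ = g y⁻¹ := by
    rcases eq_or_ne y 0 with rfl | hy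
    · simp
    rw [map_inv_of_inv_mul_add_map_inv_eq_zero f g hfg, ← CharTwo.add_eq_zero]
    exact hfg y hy
  ext x
  simpa using h x⁻¹

theorem map_mul_mul_self_of_inv_mul_add_map_inv_eq_zero (a b : K) : f (a * b * a) = a * f b := by
  rcases eq_or_ne a 0 with rfl | ha
  · simp
  rcases eq_or_ne b 0 with rfl | hb
  · simp
  have hinv := map_inv_of_inv_mul_add_map_inv_eq_zero f g hfg b
  rcases eq_or_ne (a + b⁻¹) 0 with hab | hab
  · obtain rfl := CharTwo.add_eq_zero.mp hab
    rw [inv_mul_cancel₀ hb, one_mul, hinv]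
  · rw [show a * b * a = a ^ 2 / b⁻¹ by field_simp,
      map_sq_div_of_inv_mul_add_map_inv_eq_zero f g hfg ha (inv_ne_zero hb) hab, hinv]
    field_simp

end CharTwo

theorem stmt_12 (D : Type*) [Field D] [CharP D 2] (f g : D → D)
    (hf : ∀ x y, f (x + y) = f x + f y)
    (hg : ∀ x y, g (x + y) = g x + g y)
    (hfg : ∀ x : D, x ≠ 0 → x⁻¹ * f x + g x⁻¹ = 0) :
    f = g ∧ ∀ a b : D, f (a * b * a) = a * f b := by
  let F := AddMonoidHom.mk' f hf
  let G := AddMonoidHom.mk' g hg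
  exact ⟨congrArg DFunLike.coe (CharTwo.eq_of_inv_mul_add_map_inv_eq_zero F G hfg),
    CharTwo.map_mul_mul_self_of_inv_mul_add_map_inv_eq_zero F G hfg⟩
end

section
/- Let D = Z_2(t). Given A, B ∈ D, the assignment f((P(t²)+Q(t²)t)/(R(t²)+S(t²)t)) = ((P(t)R(t)+Q(t)S(t)t)/(R(t²)+S(t²)t))·A + ((P(t)S(t)+Q(t)R(t))/(R(t²)+S(t²)t))·B is well-defined: if (P(t²)+Q(t²)t)/(R(t²)+S(t²)t) = (P̂(t²)+Q̂(t²)t)/(R̂(t²)+Ŝ(t²)t), then the corresponding right-hand sides agree. -/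
/-!
In characteristic 2, `P(t²) = P(t)²`; writing `p = P(t)`, `q = Q(t)`, ... the fraction is
`(p² + q²t) / (r² + s²t)`, and the coefficients `u`, `v` of `A` and `B` satisfy
`u² + v²t = (p² + q²t) / (r² + s²t)` (square `(p + q√t) / (r + s√t) = u + v√t`).
Since `t` is not a square in `𝔽₂(t)`, `u² + v²t` determines `u` and `v`: their differences satisfy
`(u - u')² = (v - v')² t`.
-/

open Polynomial

theorem ZMod.aeval_pow_prime {p : ℕ} [Fact p.Prime] {A : Type*} [CommSemiring A]
    [Algebra (ZMod p) A] (P : (ZMod p)[X]) (x : A) : aeval (x ^ p) P = aeval x P ^ p := by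
  rw [← expand_aeval, ZMod.expand_card, map_pow]

theorem RatFunc.not_isSquare_X {K : Type*} [Field K] : ¬IsSquare (RatFunc.X : RatFunc K) := by
  rintro ⟨f, hf⟩
  have hf0 : f ≠ 0 := by
    rintro rfl
    exact RatFunc.X_ne_zero (by simpa using hf)
  have := congrArg RatFunc.intDegree hf
  rw [RatFunc.intDegree_mul hf0 hf0, RatFunc.intDegree_X] at this
  omega

section CharTwo

variable {K : Type*} [Field K] [CharP K 2]

theorem CharTwo.div_eq_sq_add_sq_mul (x p q r s : K) :
    (p ^ 2 + q ^ 2 * x) / (r ^ 2 + s ^ 2 * x) =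
      ((p * r + q * s * x) / (r ^ 2 + s ^ 2 * x)) ^ 2 +
        ((p * s + q * r) / (r ^ 2 + s ^ 2 * x)) ^ 2 * x := by
  have h2 : (2 : K) = 0 := CharTwo.two_eq_zero
  set d := r ^ 2 + s ^ 2 * x
  have hnorm : (p * r + q * s * x) ^ 2 + (p * s + q * r) ^ 2 * x = (p ^ 2 + q ^ 2 * x) * d := by
    linear_combination 2 * p * q * r * s * x * h2
  rcases eq_or_ne d 0 with hd | hd
  · simp [hd]
  calc (p ^ 2 + q ^ 2 * x) / d = (p ^ 2 + q ^ 2 * x) * d / d ^ 2 := by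
        rw [sq d, mul_div_mul_right _ _ hd]
    _ = _ := by rw [← hnorm, div_pow, div_pow, div_mul_eq_mul_div, add_div]

theorem CharTwo.sq_add_sq_mul_inj {x u v u' v' : K} (hx : ¬IsSquare x)
    (h : u ^ 2 + v ^ 2 * x = u' ^ 2 + v' ^ 2 * x) : u = u' ∧ v = v' := by
  have h2 : (2 : K) = 0 := CharTwo.two_eq_zero
  have hsum : (u - u') ^ 2 = (v - v') ^ 2 * x := by
    linear_combination h + (u' ^ 2 - u * u' - v ^ 2 * x + v * v' * x) * h2
  have hv : v = v' := by
    by_contra hne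
    refine hx ⟨(u - u') / (v - v'), ?_⟩
    rw [← sq, div_pow, eq_div_iff (pow_ne_zero 2 (sub_ne_zero.mpr hne)), hsum, mul_comm]
  subst hv
  exact ⟨sub_eq_zero.mp (pow_eq_zero_iff two_ne_zero |>.mp (by simpa using hsum)), rfl⟩

end CharTwo

open Polynomial in
theorem stmt_15_general (A B : RatFunc (ZMod 2)) (P Q R S P' Q' R' S' : Polynomial (ZMod 2))
    (heq : (aeval ((RatFunc.X : RatFunc (ZMod 2)) ^ 2) P + aeval ((RatFunc.X : RatFunc (ZMod 2)) ^ 2) Q * (RatFunc.X : RatFunc (ZMod 2))) /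
        (aeval ((RatFunc.X : RatFunc (ZMod 2)) ^ 2) R + aeval ((RatFunc.X : RatFunc (ZMod 2)) ^ 2) S * (RatFunc.X : RatFunc (ZMod 2))) =
      (aeval ((RatFunc.X : RatFunc (ZMod 2)) ^ 2) P' + aeval ((RatFunc.X : RatFunc (ZMod 2)) ^ 2) Q' * (RatFunc.X : RatFunc (ZMod 2))) /
        (aeval ((RatFunc.X : RatFunc (ZMod 2)) ^ 2) R' + aeval ((RatFunc.X : RatFunc (ZMod 2)) ^ 2) S' * (RatFunc.X : RatFunc (ZMod 2)))) :
    (aeval (RatFunc.X : RatFunc (ZMod 2)) P * aeval (RatFunc.X : RatFunc (ZMod 2)) R + aeval (RatFunc.X : RatFunc (ZMod 2)) Q * aeval (RatFunc.X : RatFunc (ZMod 2)) S * (RatFunc.X : RatFunc (ZMod 2))) /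
        (aeval ((RatFunc.X : RatFunc (ZMod 2)) ^ 2) R + aeval ((RatFunc.X : RatFunc (ZMod 2)) ^ 2) S * (RatFunc.X : RatFunc (ZMod 2))) * A +
      (aeval (RatFunc.X : RatFunc (ZMod 2)) P * aeval (RatFunc.X : RatFunc (ZMod 2)) S + aeval (RatFunc.X : RatFunc (ZMod 2)) Q * aeval (RatFunc.X : RatFunc (ZMod 2)) R) /
        (aeval ((RatFunc.X : RatFunc (ZMod 2)) ^ 2) R + aeval ((RatFunc.X : RatFunc (ZMod 2)) ^ 2) S * (RatFunc.X : RatFunc (ZMod 2))) * B =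
    (aeval (RatFunc.X : RatFunc (ZMod 2)) P' * aeval (RatFunc.X : RatFunc (ZMod 2)) R' + aeval (RatFunc.X : RatFunc (ZMod 2)) Q' * aeval (RatFunc.X : RatFunc (ZMod 2)) S' * (RatFunc.X : RatFunc (ZMod 2))) /
        (aeval ((RatFunc.X : RatFunc (ZMod 2)) ^ 2) R' + aeval ((RatFunc.X : RatFunc (ZMod 2)) ^ 2) S' * (RatFunc.X : RatFunc (ZMod 2))) * A +
      (aeval (RatFunc.X : RatFunc (ZMod 2)) P' * aeval (RatFunc.X : RatFunc (ZMod 2)) S' + aeval (RatFunc.X : RatFunc (ZMod 2)) Q' * aeval (RatFunc.X : RatFunc (ZMod 2)) R') /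
        (aeval ((RatFunc.X : RatFunc (ZMod 2)) ^ 2) R' + aeval ((RatFunc.X : RatFunc (ZMod 2)) ^ 2) S' * (RatFunc.X : RatFunc (ZMod 2))) * B := by
  simp only [ZMod.aeval_pow_prime] at heq ⊢
  rw [CharTwo.div_eq_sq_add_sq_mul, CharTwo.div_eq_sq_add_sq_mul] at heq
  obtain ⟨hu, hv⟩ := CharTwo.sq_add_sq_mul_inj RatFunc.not_isSquare_X heq
  rw [hu, hv]

open Polynomial in
theorem stmt_15 (A B : RatFunc (ZMod 2)) (P Q R S P' Q' R' S' : Polynomial (ZMod 2))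
    (hden : aeval ((RatFunc.X : RatFunc (ZMod 2)) ^ 2) R + aeval ((RatFunc.X : RatFunc (ZMod 2)) ^ 2) S * (RatFunc.X : RatFunc (ZMod 2)) ≠ 0)
    (hden' : aeval ((RatFunc.X : RatFunc (ZMod 2)) ^ 2) R' + aeval ((RatFunc.X : RatFunc (ZMod 2)) ^ 2) S' * (RatFunc.X : RatFunc (ZMod 2)) ≠ 0)
    (heq : (aeval ((RatFunc.X : RatFunc (ZMod 2)) ^ 2) P + aeval ((RatFunc.X : RatFunc (ZMod 2)) ^ 2) Q * (RatFunc.X : RatFunc (ZMod 2))) /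
        (aeval ((RatFunc.X : RatFunc (ZMod 2)) ^ 2) R + aeval ((RatFunc.X : RatFunc (ZMod 2)) ^ 2) S * (RatFunc.X : RatFunc (ZMod 2))) =
      (aeval ((RatFunc.X : RatFunc (ZMod 2)) ^ 2) P' + aeval ((RatFunc.X : RatFunc (ZMod 2)) ^ 2) Q' * (RatFunc.X : RatFunc (ZMod 2))) /
        (aeval ((RatFunc.X : RatFunc (ZMod 2)) ^ 2) R' + aeval ((RatFunc.X : RatFunc (ZMod 2)) ^ 2) S' * (RatFunc.X : RatFunc (ZMod 2)))) :
    (aeval (RatFunc.X : RatFunc (ZMod 2)) P * aeval (RatFunc.X : RatFunc (ZMod 2)) R + aeval (RatFunc.X : RatFunc (ZMod 2)) Q * aeval (RatFunc.X : RatFunc (ZMod 2)) S * (RatFunc.X : RatFunc (ZMod 2))) /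
        (aeval ((RatFunc.X : RatFunc (ZMod 2)) ^ 2) R + aeval ((RatFunc.X : RatFunc (ZMod 2)) ^ 2) S * (RatFunc.X : RatFunc (ZMod 2))) * A +
      (aeval (RatFunc.X : RatFunc (ZMod 2)) P * aeval (RatFunc.X : RatFunc (ZMod 2)) S + aeval (RatFunc.X : RatFunc (ZMod 2)) Q * aeval (RatFunc.X : RatFunc (ZMod 2)) R) /
        (aeval ((RatFunc.X : RatFunc (ZMod 2)) ^ 2) R + aeval ((RatFunc.X : RatFunc (ZMod 2)) ^ 2) S * (RatFunc.X : RatFunc (ZMod 2))) * B =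
    (aeval (RatFunc.X : RatFunc (ZMod 2)) P' * aeval (RatFunc.X : RatFunc (ZMod 2)) R' + aeval (RatFunc.X : RatFunc (ZMod 2)) Q' * aeval (RatFunc.X : RatFunc (ZMod 2)) S' * (RatFunc.X : RatFunc (ZMod 2))) /
        (aeval ((RatFunc.X : RatFunc (ZMod 2)) ^ 2) R' + aeval ((RatFunc.X : RatFunc (ZMod 2)) ^ 2) S' * (RatFunc.X : RatFunc (ZMod 2))) * A +
      (aeval (RatFunc.X : RatFunc (ZMod 2)) P' * aeval (RatFunc.X : RatFunc (ZMod 2)) S' + aeval (RatFunc.X : RatFunc (ZMod 2)) Q' * aeval (RatFunc.X : RatFunc (ZMod 2)) R') /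
        (aeval ((RatFunc.X : RatFunc (ZMod 2)) ^ 2) R' + aeval ((RatFunc.X : RatFunc (ZMod 2)) ^ 2) S' * (RatFunc.X : RatFunc (ZMod 2))) * B :=
  stmt_15_general A B P Q R S P' Q' R' S' heq
end

section
/- Let D = Z_2(t) and A, B ∈ D. The function f : D → D defined by f((P(t²)+Q(t²)t)/(R(t²)+S(t²)t)) = ((P(t)R(t)+Q(t)S(t)t)A + (P(t)S(t)+Q(t)R(t))B)/(R(t²)+S(t²)t) is additive and satisfies f(1) = A and f(t) = B. -/
/-!
Every polynomial in `t` splits into even and odd parts, `N(t) = P(t²) + Q(t²) t`, so every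
element of `𝔽₂(t)` — and any two of them over a common denominator `R(t²) + S(t²) t` — has a
representation to which the defining formula of `f` applies. For a fixed denominator that formula
is additive in the numerator data `(P, Q)`, hence `f` is additive; `f 1` and `f t` are read off
from the representations `1 = 1 / 1` and `t = t / 1`.
-/

open Polynomial

theorem Polynomial.exists_eq_expand_two_add_expand_two_mul_X {R : Type*} [CommSemiring R]
    (p : R[X]) : ∃ P Q : R[X], p = expand R 2 P + expand R 2 Q * X := by
  induction p using Polynomial.induction_on' with
  | add p q hp hq =>
    obtain ⟨P₁, Q₁, rfl⟩ := hp
    obtain ⟨P₂, Q₂, rfl⟩ := hq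
    exact ⟨P₁ + P₂, Q₁ + Q₂, by simp only [map_add]; ring⟩
  | monomial n a =>
    rcases Nat.even_or_odd' n with ⟨k, rfl | rfl⟩
    · exact ⟨monomial k a, 0, by simp [expand_monomial, mul_comm]⟩
    · exact ⟨0, monomial k a, by simp [expand_monomial, mul_comm]⟩

theorem Polynomial.exists_aeval_eq_aeval_sq_add_aeval_sq_mul {R A : Type*} [CommSemiring R]
    [CommSemiring A] [Algebra R A] (p : R[X]) (r : A) :
    ∃ P Q : R[X], aeval r p = aeval (r ^ 2) P + aeval (r ^ 2) Q * r := by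
  obtain ⟨P, Q, rfl⟩ := p.exists_eq_expand_two_add_expand_two_mul_X
  exact ⟨P, Q, by simp only [map_add, map_mul, expand_aeval, aeval_X]⟩

theorem IsFractionRing.exists_eq_div_same_denom (A : Type*) {K : Type*} [CommRing A] [IsDomain A]
    [Field K] [Algebra A K] [IsFractionRing A K] (x y : K) :
    ∃ a b d : A, algebraMap A K d ≠ 0 ∧
      x = algebraMap A K a / algebraMap A K d ∧ y = algebraMap A K b / algebraMap A K d := by
  obtain ⟨a, c, hc, rfl⟩ := IsFractionRing.div_surjective A x
  obtain ⟨b, e, he, rfl⟩ := IsFractionRing.div_surjective A y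
  have hc' := IsFractionRing.to_map_ne_zero_of_mem_nonZeroDivisors hc (K := K)
  have he' := IsFractionRing.to_map_ne_zero_of_mem_nonZeroDivisors he (K := K)
  refine ⟨a * e, b * c, c * e, ?_, ?_, ?_⟩ <;> simp only [map_mul]
  · exact mul_ne_zero hc' he'
  · rw [mul_div_mul_right _ _ he']
  · rw [mul_comm (algebraMap A K c), mul_div_mul_right _ _ hc']

open Polynomial in
theorem stmt_16 (A B : RatFunc (ZMod 2)) (f : RatFunc (ZMod 2) → RatFunc (ZMod 2))
    (hf : ∀ P Q R S : Polynomial (ZMod 2),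
      aeval ((RatFunc.X : RatFunc (ZMod 2)) ^ 2) R + aeval ((RatFunc.X : RatFunc (ZMod 2)) ^ 2) S * (RatFunc.X : RatFunc (ZMod 2)) ≠ 0 →
      f ((aeval ((RatFunc.X : RatFunc (ZMod 2)) ^ 2) P + aeval ((RatFunc.X : RatFunc (ZMod 2)) ^ 2) Q * (RatFunc.X : RatFunc (ZMod 2))) /
          (aeval ((RatFunc.X : RatFunc (ZMod 2)) ^ 2) R + aeval ((RatFunc.X : RatFunc (ZMod 2)) ^ 2) S * (RatFunc.X : RatFunc (ZMod 2)))) =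
        ((aeval (RatFunc.X : RatFunc (ZMod 2)) P * aeval (RatFunc.X : RatFunc (ZMod 2)) R +
            aeval (RatFunc.X : RatFunc (ZMod 2)) Q * aeval (RatFunc.X : RatFunc (ZMod 2)) S * (RatFunc.X : RatFunc (ZMod 2))) * A +
          (aeval (RatFunc.X : RatFunc (ZMod 2)) P * aeval (RatFunc.X : RatFunc (ZMod 2)) S + aeval (RatFunc.X : RatFunc (ZMod 2)) Q * aeval (RatFunc.X : RatFunc (ZMod 2)) R) * B) /
          (aeval ((RatFunc.X : RatFunc (ZMod 2)) ^ 2) R + aeval ((RatFunc.X : RatFunc (ZMod 2)) ^ 2) S * (RatFunc.X : RatFunc (ZMod 2)))) :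
    (∀ x y, f (x + y) = f x + f y) ∧ f 1 = A ∧ f (RatFunc.X : RatFunc (ZMod 2)) = B := by
  set t : RatFunc (ZMod 2) := RatFunc.X
  have hone : aeval (t ^ 2) (1 : (ZMod 2)[X]) + aeval (t ^ 2) (0 : (ZMod 2)[X]) * t ≠ 0 := by
    simp
  refine ⟨fun x y => ?_, by simpa using hf 1 0 1 0 hone, by simpa using hf 0 1 1 0 hone⟩
  obtain ⟨a, b, d, hd, rfl, rfl⟩ := IsFractionRing.exists_eq_div_same_denom (ZMod 2)[X] x y
  simp only [← RatFunc.aeval_X_left_eq_algebraMap] at hd ⊢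
  obtain ⟨P₁, Q₁, ha⟩ := a.exists_aeval_eq_aeval_sq_add_aeval_sq_mul t
  obtain ⟨P₂, Q₂, hb⟩ := b.exists_aeval_eq_aeval_sq_add_aeval_sq_mul t
  obtain ⟨R, S, hRS⟩ := d.exists_aeval_eq_aeval_sq_add_aeval_sq_mul t
  rw [hRS] at hd
  have hsum : aeval t a + aeval t b =
      aeval (t ^ 2) (P₁ + P₂) + aeval (t ^ 2) (Q₁ + Q₂) * t := by
    rw [ha, hb, map_add, map_add]; ring
  rw [← add_div, hsum, ha, hb, hRS, hf _ _ _ _ hd, hf _ _ _ _ hd, hf _ _ _ _ hd,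
    ← add_div, map_add, map_add]
  ring
end

section
/- Let D = Z_2(t) and A, B ∈ D, and let f : D → D be defined by f((P(t²)+Q(t²)t)/(R(t²)+S(t²)t)) = ((P(t)R(t)+Q(t)S(t)t)A + (P(t)S(t)+Q(t)R(t))B)/(R(t²)+S(t²)t). Then x f(x^{-1}) = f(x) for every nonzero x ∈ D; equivalently, x^{-1} f(x) + f(x^{-1}) = 0 for all x ≠ 0. -/
/-!
Every polynomial splits into even and odd parts, `p(t) = P(t²) + Q(t²) t`, so writing `x` as
`num / denom` puts it in the form the defining formula of `f` requires, and `x⁻¹ = denom / num`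
is the same form with `(P, Q)` and `(R, S)` swapped. The numerator of the formula is symmetric
under this swap, so `f x⁻¹` differs from `f x` only in its denominator, giving `x * f x⁻¹ = f x`;
in characteristic 2 this is the second identity.
-/

open Polynomial

namespace Polynomial

variable {R : Type*} [CommSemiring R]

theorem exists_eq_expand_two_add_expand_two_mul_X_s17 (p : R[X]) :
    ∃ P Q : R[X], p = expand R 2 P + expand R 2 Q * X := by
  induction p using Polynomial.induction_on' with
  | add p q hp hq =>
    obtain ⟨P₁, Q₁, rfl⟩ := hp
    obtain ⟨P₂, Q₂, rfl⟩ := hq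
    exact ⟨P₁ + P₂, Q₁ + Q₂, by simp only [map_add]; ring⟩
  | monomial n c =>
    obtain ⟨k, rfl | rfl⟩ := Nat.even_or_odd' n
    · exact ⟨monomial k c, 0, by rw [expand_monomial, mul_comm]; simp⟩
    · exact ⟨0, monomial k c, by rw [expand_monomial, monomial_mul_X, mul_comm]; simp⟩

theorem exists_aeval_eq_aeval_sq_add_aeval_sq_mul_s17 {A : Type*} [CommSemiring A] [Algebra R A]
    (t : A) (p : R[X]) : ∃ P Q : R[X], aeval t p = aeval (t ^ 2) P + aeval (t ^ 2) Q * t := by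
  obtain ⟨P, Q, rfl⟩ := exists_eq_expand_two_add_expand_two_mul_X_s17 p
  exact ⟨P, Q, by simp⟩

end Polynomial

theorem RatFunc.exists_algebraMap_eq_aeval_X_sq_add_aeval_X_sq_mul_X {K : Type*} [Field K]
    (p : K[X]) : ∃ P Q : K[X], algebraMap K[X] (RatFunc K) p =
      aeval ((RatFunc.X : RatFunc K) ^ 2) P + aeval ((RatFunc.X : RatFunc K) ^ 2) Q * RatFunc.X := by
  rw [← RatFunc.aeval_X_left_eq_algebraMap]
  exact exists_aeval_eq_aeval_sq_add_aeval_sq_mul_s17 _ p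

open Polynomial in
theorem stmt_17 (A B : RatFunc (ZMod 2)) (f : RatFunc (ZMod 2) → RatFunc (ZMod 2))
    (hf : ∀ P Q R S : Polynomial (ZMod 2),
      aeval ((RatFunc.X : RatFunc (ZMod 2)) ^ 2) R + aeval ((RatFunc.X : RatFunc (ZMod 2)) ^ 2) S * (RatFunc.X : RatFunc (ZMod 2)) ≠ 0 →
      f ((aeval ((RatFunc.X : RatFunc (ZMod 2)) ^ 2) P + aeval ((RatFunc.X : RatFunc (ZMod 2)) ^ 2) Q * (RatFunc.X : RatFunc (ZMod 2))) /
          (aeval ((RatFunc.X : RatFunc (ZMod 2)) ^ 2) R + aeval ((RatFunc.X : RatFunc (ZMod 2)) ^ 2) S * (RatFunc.X : RatFunc (ZMod 2)))) =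
        ((aeval (RatFunc.X : RatFunc (ZMod 2)) P * aeval (RatFunc.X : RatFunc (ZMod 2)) R +
            aeval (RatFunc.X : RatFunc (ZMod 2)) Q * aeval (RatFunc.X : RatFunc (ZMod 2)) S * (RatFunc.X : RatFunc (ZMod 2))) * A +
          (aeval (RatFunc.X : RatFunc (ZMod 2)) P * aeval (RatFunc.X : RatFunc (ZMod 2)) S + aeval (RatFunc.X : RatFunc (ZMod 2)) Q * aeval (RatFunc.X : RatFunc (ZMod 2)) R) * B) /
          (aeval ((RatFunc.X : RatFunc (ZMod 2)) ^ 2) R + aeval ((RatFunc.X : RatFunc (ZMod 2)) ^ 2) S * (RatFunc.X : RatFunc (ZMod 2)))) :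
    ∀ x : RatFunc (ZMod 2), x ≠ 0 →
      x * f x⁻¹ = f x ∧ x⁻¹ * f x + f x⁻¹ = 0 := by
  intro x hx
  obtain ⟨P, Q, hnum⟩ := RatFunc.exists_algebraMap_eq_aeval_X_sq_add_aeval_X_sq_mul_X x.num
  obtain ⟨R, S, hdenom⟩ := RatFunc.exists_algebraMap_eq_aeval_X_sq_add_aeval_X_sq_mul_X x.denom
  have hx_eq := x.num_div_denom
  rw [hnum, hdenom] at hx_eq
  have hnum_ne := hnum ▸ (RatFunc.algebraMap_ne_zero (x.num_ne_zero hx))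
  have hdenom_ne := hdenom ▸ (RatFunc.algebraMap_ne_zero x.denom_ne_zero)
  have hfx := hf P Q R S hdenom_ne
  have hfx_inv := hf R S P Q hnum_ne
  rw [hx_eq] at hfx
  rw [← inv_div, hx_eq] at hfx_inv
  have hmul : x * f x⁻¹ = f x := by
    rw [hfx, hfx_inv, ← hx_eq, div_mul_div_comm, div_eq_div_iff (mul_ne_zero hdenom_ne hnum_ne) hdenom_ne]
    ring
  refine ⟨hmul, ?_⟩
  rw [← hmul, ← mul_assoc, inv_mul_cancel₀ hx, one_mul, CharTwo.add_self_eq_zero]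
end

section
/- Let D = Z_2(t) be the field of rational functions over Z_2. For every pair A, B ∈ D, there exists exactly one pair (f, g) of additive functions f, g : D → D with f(1) = A, f(t) = B, and x^{-1} f(x) + g(x^{-1}) = 0 for every nonzero x ∈ D; moreover necessarily f = g. In particular, Question 2 (whether the existence of such f, g forces D to be perfect) has a negative answer, since Z_2(t) is not perfect. -/
/-!
In characteristic two, `1/(cx) + 1/(c(x+1)) = 1/(cx(x+1))`, so additivity of `g` turns the identity
`g(1/y) = f(y)/y` into `f(c x²) = x f(c)`. With `c = y, x = 1/y` this gives `g = f`, and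
since every element of `𝔽₂(t)` is uniquely `p² + t q²` (`t` being a non-square), `f` must be
`p² + t q² ↦ A p + B q`; conversely this map is a solution because
`1/x = (p/x)² + t (q/x)²`.
-/

open Polynomial

theorem Polynomial.exists_eq_sq_add_X_mul_sq {R : Type*} [CommRing R] [CharP R 2]
    [PerfectRing R 2] (r : R[X]) : ∃ p q : R[X], r = p ^ 2 + X * q ^ 2 := by
  induction r using Polynomial.induction_on' with
  | add r s hr hs =>
    obtain ⟨p, q, rfl⟩ := hr
    obtain ⟨p', q', rfl⟩ := hs
    exact ⟨p + p', q + q', by rw [CharTwo.add_sq, CharTwo.add_sq]; ring⟩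
  | monomial n a =>
    obtain ⟨b, rfl⟩ := surjective_frobenius R 2 a
    rw [frobenius_def, ← C_mul_X_pow_eq_monomial, C_pow]
    rcases Nat.even_or_odd' n with ⟨k, rfl | rfl⟩
    · exact ⟨C b * X ^ k, 0, by ring⟩
    · exact ⟨0, C b * X ^ k, by ring⟩

theorem RatFunc.exists_eq_sq_add_X_mul_sq {F : Type*} [Field F] [CharP F 2] [PerfectRing F 2]
    (x : RatFunc F) : ∃ p q : RatFunc F, x = p ^ 2 + X * q ^ 2 := by
  -- `x = (num * denom) / denom ^ 2`, and the numerator splits in `F[X]`.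
  obtain ⟨p, q, hpq⟩ := (x.num * x.denom).exists_eq_sq_add_X_mul_sq
  have hd : algebraMap F[X] (RatFunc F) x.denom ≠ 0 := algebraMap_ne_zero x.denom_ne_zero
  refine ⟨algebraMap _ _ p / algebraMap _ _ x.denom, algebraMap _ _ q / algebraMap _ _ x.denom, ?_⟩
  have hpq' := congrArg (algebraMap F[X] (RatFunc F)) hpq
  rw [map_mul, map_add, map_mul, map_pow, map_pow, algebraMap_X] at hpq'
  conv_lhs => rw [← x.num_div_denom]
  field_simp
  linear_combination hpq'

theorem RatFunc.not_exists_sq_eq_X {F : Type*} [Field F] : ¬ ∃ y : RatFunc F, y ^ 2 = X := by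
  rintro ⟨y, hy⟩
  have hy0 : y ≠ 0 := by
    rintro rfl
    exact X_ne_zero (by simpa using hy.symm)
  have hdeg := congrArg intDegree hy
  rw [sq, intDegree_mul hy0 hy0, intDegree_X] at hdeg
  omega

section CharTwoField

variable {K : Type*} [Field K] [CharP K 2]

theorem sq_add_mul_sq_injective {t : K} (ht : ¬ ∃ y, y ^ 2 = t) {p q p' q' : K}
    (h : p ^ 2 + t * q ^ 2 = p' ^ 2 + t * q' ^ 2) : p = p' ∧ q = q' := by
  have hpq : (p + p') ^ 2 = t * (q + q') ^ 2 := by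
    rw [CharTwo.add_sq, CharTwo.add_sq]
    linear_combination h + (p' ^ 2 - t * q ^ 2) * CharTwo.two_eq_zero (R := K)
  have hq : q = q' := by
    by_contra hq
    have hq' : q + q' ≠ 0 := mt CharTwo.add_eq_zero.mp hq
    exact ht ⟨(p + p') / (q + q'), by rw [div_pow, hpq, mul_div_cancel_right₀ _ (pow_ne_zero 2 hq')]⟩
  subst hq
  rw [CharTwo.add_self_eq_zero, zero_pow two_ne_zero, mul_zero, pow_eq_zero_iff two_ne_zero,
    CharTwo.add_eq_zero] at hpq
  exact ⟨hpq, rfl⟩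

theorem exists_map_sq_add_mul_sq {t : K} (ht : ¬ ∃ y, y ^ 2 = t)
    (hspan : ∀ x : K, ∃ p q, x = p ^ 2 + t * q ^ 2) (A B : K) :
    ∃ f : K → K, ∀ p q, f (p ^ 2 + t * q ^ 2) = A * p + B * q := by
  choose P Q hPQ using hspan
  refine ⟨fun x => A * P x + B * Q x, fun p q => ?_⟩
  obtain ⟨hp, hq⟩ := sq_add_mul_sq_injective ht (hPQ (p ^ 2 + t * q ^ 2)).symm
  simp only [hp, hq]

theorem exists_additive_inv_mul_add_map_inv_eq_zero {t : K} (ht : ¬ ∃ y, y ^ 2 = t)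
    (hspan : ∀ x : K, ∃ p q, x = p ^ 2 + t * q ^ 2) (A B : K) :
    ∃ f : K → K, (∀ x y, f (x + y) = f x + f y) ∧ f 1 = A ∧ f t = B ∧
      ∀ x, x ≠ 0 → x⁻¹ * f x + f x⁻¹ = 0 := by
  obtain ⟨f, hf⟩ := exists_map_sq_add_mul_sq ht hspan A B
  refine ⟨f, fun x y => ?_, by simpa using hf 1 0, by simpa using hf 0 1, fun x hx => ?_⟩
  · obtain ⟨p, q, rfl⟩ := hspan x
    obtain ⟨p', q', rfl⟩ := hspan y
    rw [show p ^ 2 + t * q ^ 2 + (p' ^ 2 + t * q' ^ 2) = (p + p') ^ 2 + t * (q + q') ^ 2 by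
      rw [CharTwo.add_sq, CharTwo.add_sq]; ring, hf, hf, hf]
    ring
  · obtain ⟨p, q, hpq⟩ := hspan x
    have hinv : x⁻¹ = (p * x⁻¹) ^ 2 + t * (q * x⁻¹) ^ 2 := by
      field_simp
      linear_combination hpq
    have hfx : f x = A * p + B * q := hpq ▸ hf p q
    have hfinv : f x⁻¹ = A * (p * x⁻¹) + B * (q * x⁻¹) := by
      conv_lhs => rw [hinv]
      exact hf _ _
    rw [CharTwo.add_eq_zero, hfx, hfinv]
    ring

variable {f g : K → K} (hf : ∀ x y, f (x + y) = f x + f y) (hg : ∀ x y, g (x + y) = g x + g y)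
  (he : ∀ x, x ≠ 0 → x⁻¹ * f x + g x⁻¹ = 0)

include hf hg he in
theorem map_mul_sq (c x : K) : f (c * x ^ 2) = x * f c := by
  have hf0 : f 0 = 0 := by simpa using hf 0 0
  have hg_inv {y : K} (hy : y ≠ 0) : g y⁻¹ = y⁻¹ * f y := (CharTwo.add_eq_zero.mp (he y hy)).symm
  rcases eq_or_ne c 0 with rfl | hc
  · simp [hf0]
  rcases eq_or_ne x 0 with rfl | hx
  · simp [hf0]
  rcases eq_or_ne (x + 1) 0 with hx1 | hx1
  · obtain rfl : x = 1 := by simpa [CharTwo.add_eq_zero] using hx1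
    simp
  have hsum : (c * x)⁻¹ + (c * (x + 1))⁻¹ = (c * x * (x + 1))⁻¹ := by
    field_simp
    linear_combination x * CharTwo.two_eq_zero (R := K)
  have key := hg (c * x)⁻¹ (c * (x + 1))⁻¹
  rw [hsum, hg_inv (by positivity), hg_inv (by positivity), hg_inv (by positivity),
    show c * x * (x + 1) = c * x ^ 2 + c * x by ring, show c * (x + 1) = c * x + c by ring,
    hf, hf] at key
  field_simp at key
  linear_combination key + x * f (c * x) * CharTwo.two_eq_zero (R := K)

include hf hg he in
theorem eq_of_inv_mul_add_map_inv_eq_zero : f = g := by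
  funext y
  rcases eq_or_ne y 0 with rfl | hy
  · have hf0 : f 0 = 0 := by simpa using hf 0 0
    have hg0 : g 0 = 0 := by simpa using hg 0 0
    rw [hf0, hg0]
  have hg_inv : g y = y * f y⁻¹ := by
    simpa [CharTwo.add_eq_zero, eq_comm] using he y⁻¹ (inv_ne_zero hy)
  rw [hg_inv, ← mul_inv_cancel_left₀ hy y⁻¹, ← sq, map_mul_sq hf hg he,
    mul_inv_cancel_left₀ hy]

include hf hg he in
theorem map_sq_add_mul_sq (t p q : K) : f (p ^ 2 + t * q ^ 2) = p * f 1 + q * f t := by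
  rw [hf, ← one_mul (p ^ 2), map_mul_sq hf hg he, map_mul_sq hf hg he]

end CharTwoField

theorem stmt_18 (A B : RatFunc (ZMod 2)) :
    (∃! fg : (RatFunc (ZMod 2) → RatFunc (ZMod 2)) × (RatFunc (ZMod 2) → RatFunc (ZMod 2)),
      (∀ x y, fg.1 (x + y) = fg.1 x + fg.1 y) ∧
      (∀ x y, fg.2 (x + y) = fg.2 x + fg.2 y) ∧
      fg.1 1 = A ∧ fg.1 RatFunc.X = B ∧
      (∀ x : RatFunc (ZMod 2), x ≠ 0 → x⁻¹ * fg.1 x + fg.2 x⁻¹ = 0)) ∧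
    (∀ fg : (RatFunc (ZMod 2) → RatFunc (ZMod 2)) × (RatFunc (ZMod 2) → RatFunc (ZMod 2)),
      ((∀ x y, fg.1 (x + y) = fg.1 x + fg.1 y) ∧
       (∀ x y, fg.2 (x + y) = fg.2 x + fg.2 y) ∧
       fg.1 1 = A ∧ fg.1 RatFunc.X = B ∧
       (∀ x : RatFunc (ZMod 2), x ≠ 0 → x⁻¹ * fg.1 x + fg.2 x⁻¹ = 0)) → fg.1 = fg.2) ∧
    ¬ ∃ y : RatFunc (ZMod 2), y ^ 2 = RatFunc.X := by
  obtain ⟨f, hf, hf1, hfX, hf_inv⟩ := exists_additive_inv_mul_add_map_inv_eq_zero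
    RatFunc.not_exists_sq_eq_X RatFunc.exists_eq_sq_add_X_mul_sq A B
  refine ⟨⟨(f, f), ⟨hf, hf, hf1, hfX, hf_inv⟩, ?_⟩, ?_, RatFunc.not_exists_sq_eq_X⟩
  · rintro fg ⟨hf', hg', hf'1, hf'X, he'⟩
    have hf'f : fg.1 = f := funext fun x => by
      obtain ⟨p, q, rfl⟩ := RatFunc.exists_eq_sq_add_X_mul_sq x
      rw [map_sq_add_mul_sq hf' hg' he', map_sq_add_mul_sq hf hf hf_inv, hf'1, hf'X, hf1, hfX]
    exact Prod.ext hf'f (eq_of_inv_mul_add_map_inv_eq_zero hf' hg' he' ▸ hf'f)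
  · rintro fg ⟨hf', hg', -, -, he'⟩
    exact eq_of_inv_mul_add_map_inv_eq_zero hf' hg' he'
end
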